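/- arXiv:1907.10592 — 4 statements merged into one kernel-verified Lean document; each statement's English description precedes it below -/
import Mathlib

section
/- For the function g(x) = sin(x)/x (extended by g(0)=1), the first derivative satisfies g'(x) = (x cos x - sin x)/x² for x ≠ 0, and |g'(x)| ≤ 1/2 for all real x. -/
open Real

theorem deriv_zero_eq_zero_of_even {F : Type*} [NormedAddCommGroup F] [NormedSpace ℝ F]
    {f : ℝ → F} (hf : ∀ x, f (-x) = f x) : deriv f 0 = 0 := by
  have h := deriv_comp_neg (f := f) (x := 0)
  simp only [hf, neg_zero] at h
  rw [eq_neg_iff_add_eq_zero, ← two_smul ℝ] at h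
  exact (smul_eq_zero.mp h).resolve_left two_ne_zero

namespace Real

theorem hasDerivAt_sinc_of_ne_zero {x : ℝ} (hx : x ≠ 0) :
    HasDerivAt sinc ((x * cos x - sin x) / x ^ 2) x := by
  have hsinc : (fun y => sin y / y) =ᶠ[nhds x] sinc := by
    filter_upwards [isOpen_ne.mem_nhds hx] with y hy
    exact (sinc_of_ne_zero hy).symm
  exact (((hasDerivAt_sin x).div (hasDerivAt_id' x) hx).congr_of_eventuallyEq
    hsinc.symm).congr_deriv (by ring)

theorem deriv_sinc_zero : deriv sinc 0 = 0 :=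
  deriv_zero_eq_zero_of_even sinc_neg

theorem hasDerivAt_mul_cos_sub_sin (x : ℝ) :
    HasDerivAt (fun s => s * cos s - sin s) (-(x * sin x)) x :=
  (((hasDerivAt_id' x).mul (hasDerivAt_cos x)).sub (hasDerivAt_sin x)).congr_deriv (by ring)

/-- Fencing `s cos s - sin s`, whose derivative `-s sin s` has norm at most `s`, by `s² / 2`. -/
theorem abs_mul_cos_sub_sin_le (x : ℝ) : |x * cos x - sin x| ≤ x ^ 2 / 2 := by
  have hnonneg : ∀ x, 0 ≤ x → |x * cos x - sin x| ≤ x ^ 2 / 2 := by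
    intro x hx
    refine image_norm_le_of_norm_deriv_right_le_deriv_boundary
      (B := fun s => s ^ 2 / 2) (B' := id)
      (fun s _ => (hasDerivAt_mul_cos_sub_sin s).continuousAt.continuousWithinAt)
      (fun s _ => (hasDerivAt_mul_cos_sub_sin s).hasDerivWithinAt) (a := 0) (b := x)
      (by simp) (fun s => ?_) (fun s hs => ?_) ⟨hx, le_rfl⟩
    · simpa using (hasDerivAt_pow 2 s).div_const 2
    · rw [norm_neg, norm_mul, norm_of_nonneg hs.1, id]
      exact mul_le_of_le_one_right hs.1 (abs_sin_le_one s)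
  rcases le_total 0 x with hx | hx
  · exact hnonneg x hx
  · simpa [cos_neg, sin_neg, ← abs_neg (x * cos x - sin x), neg_add_eq_sub, add_comm]
      using hnonneg (-x) (neg_nonneg.mpr hx)

theorem abs_deriv_sinc_le (x : ℝ) : |deriv sinc x| ≤ 1 / 2 := by
  rcases eq_or_ne x 0 with rfl | hx
  · simp [deriv_sinc_zero]
  rw [(hasDerivAt_sinc_of_ne_zero hx).deriv, abs_div, abs_of_nonneg (sq_nonneg x),
    div_le_iff₀ (by positivity)]
  linarith [abs_mul_cos_sub_sin_le x]

end Real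

/-- For `g(x) = sin(x)/x` (with `g(0) = 1`), the derivative satisfies
`g'(x) = (x cos x - sin x)/x²` for `x ≠ 0`, and `|g'(x)| ≤ 1/2` for all `x`. -/
theorem sinc_deriv_formula_and_bound
    (g : ℝ → ℝ) (hg : ∀ x, g x = if x = 0 then 1 else Real.sin x / x) :
    (∀ x : ℝ, x ≠ 0 →
      deriv g x = (x * Real.cos x - Real.sin x) / x ^ 2) ∧
    (∀ x : ℝ, |deriv g x| ≤ 1 / 2) := by
  obtain rfl : g = sinc := funext hg
  exact ⟨fun x hx => (hasDerivAt_sinc_of_ne_zero hx).deriv, abs_deriv_sinc_le⟩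
end

section
/- For the sinus cardinal function g(x) = sin(x)/x, the second derivative satisfies g''(x) = -((x²-2) sin x + 2x cos x)/x³ for x ≠ 0, and |g''(x)| ≤ 1/2 for all real x. -/
/-!
Writing `sinc x = ∫₀¹ cos (t x) dt` and differentiating twice under the integral sign gives
`sinc'' x = -∫₀¹ t² cos (t x) dt`, whose absolute value is at most `∫₀¹ t² dt = 1/3`.
For `x ≠ 0` the closed form comes from an explicit primitive of `t ↦ t² cos (t x)`.
-/

open Real

theorem hasDerivAt_intervalIntegral_mul_comp_mul {p f f' : ℝ → ℝ} {C : ℝ} (a b : ℝ)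
    (hp : Continuous p) (hf : ∀ y, HasDerivAt f (f' y) y) (hf' : Continuous f')
    (hC : ∀ y, |f' y| ≤ C) (x : ℝ) :
    HasDerivAt (fun x => ∫ t in a..b, p t * f (t * x)) (∫ t in a..b, p t * t * f' (t * x)) x := by
  have hfc : Continuous f := continuous_iff_continuousAt.2 fun y => (hf y).continuousAt
  refine (intervalIntegral.hasDerivAt_integral_of_dominated_loc_of_deriv_le
    (F := fun x t => p t * f (t * x)) (F' := fun x t => p t * t * f' (t * x))
    (bound := fun t => |p t * t| * C) (s := Set.univ) Filter.univ_mem ?_ ?_ ?_ ?_ ?_ ?_).2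
  · exact .of_forall fun y =>
      (by fun_prop : Continuous fun t => p t * f (t * y)).aestronglyMeasurable
  · exact (by fun_prop : Continuous fun t => p t * f (t * x)).intervalIntegrable a b
  · exact (by fun_prop : Continuous fun t => p t * t * f' (t * x)).aestronglyMeasurable
  · refine .of_forall fun t _ y _ => ?_
    rw [Real.norm_eq_abs, abs_mul]
    exact mul_le_mul_of_nonneg_left (hC _) (abs_nonneg _)
  · exact (by fun_prop : Continuous fun t => |p t * t| * C).intervalIntegrable a b
  · refine .of_forall fun t _ y _ => ?_
    have := ((hf (t * y)).comp y ((hasDerivAt_id y).const_mul t)).const_mul (p t)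
    simpa [mul_assoc, mul_comm t] using this

theorem sinc_eq_integral_cos_mul (x : ℝ) : sinc x = ∫ t in (0 : ℝ)..1, cos (t * x) := by
  rcases eq_or_ne x 0 with rfl | hx
  · simp
  · rw [sinc_of_ne_zero hx, intervalIntegral.integral_comp_mul_right cos hx]
    simp [div_eq_inv_mul]

theorem hasDerivAt_sinc (x : ℝ) : HasDerivAt sinc (-∫ t in (0 : ℝ)..1, t * sin (t * x)) x := by
  have h := hasDerivAt_intervalIntegral_mul_comp_mul (p := fun _ => 1) (f := cos) (f' := (-sin ·))
    (C := 1) 0 1 continuous_const hasDerivAt_cos (by fun_prop) (fun y => by simp [abs_sin_le_one]) x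
  rw [funext sinc_eq_integral_cos_mul, ← intervalIntegral.integral_neg]
  simpa using h

theorem iteratedDeriv_two_sinc (x : ℝ) :
    iteratedDeriv 2 sinc x = -∫ t in (0 : ℝ)..1, t ^ 2 * cos (t * x) := by
  have h := hasDerivAt_intervalIntegral_mul_comp_mul (p := id) (f := (-sin ·)) (f' := (-cos ·))
    (C := 1) 0 1 continuous_id (fun y => (hasDerivAt_sin y).neg) (by fun_prop)
    (fun y => by simp [abs_cos_le_one]) x
  rw [iteratedDeriv_succ, iteratedDeriv_one, funext fun y => (hasDerivAt_sinc y).deriv,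
    ← intervalIntegral.integral_neg]
  simpa [sq, mul_assoc] using h.deriv

theorem abs_iteratedDeriv_two_sinc_le (x : ℝ) : |iteratedDeriv 2 sinc x| ≤ 1 / 3 := by
  have hle : ‖∫ t in (0 : ℝ)..1, t ^ 2 * cos (t * x)‖ ≤ |∫ t in (0 : ℝ)..1, t ^ 2| := by
    refine intervalIntegral.norm_integral_le_abs_of_norm_le (.of_forall fun t => ?_)
      ((continuous_pow 2).intervalIntegrable 0 1)
    rw [Real.norm_eq_abs, abs_mul, abs_sq]
    exact mul_le_of_le_one_right (sq_nonneg t) (abs_cos_le_one _)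
  rw [iteratedDeriv_two_sinc, abs_neg, ← Real.norm_eq_abs]
  norm_num [integral_pow] at hle
  exact hle

theorem hasDerivAt_primitive_sq_mul_cos_mul {x : ℝ} (hx : x ≠ 0) (t : ℝ) :
    HasDerivAt (fun t => ((t ^ 2 * x ^ 2 - 2) * sin (t * x) + 2 * t * x * cos (t * x)) / x ^ 3)
      (t ^ 2 * cos (t * x)) t := by
  have hmul : HasDerivAt (fun t => t * x) x t := hasDerivAt_mul_const x
  have hsin := (((hasDerivAt_pow 2 t).mul_const (x ^ 2)).sub_const 2).mul hmul.sin
  have hcos := (((hasDerivAt_id' t).const_mul 2).mul_const x).mul hmul.cos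
  refine ((hsin.add hcos).div_const (x ^ 3)).congr_deriv ?_
  field_simp
  ring

theorem iteratedDeriv_two_sinc_of_ne_zero {x : ℝ} (hx : x ≠ 0) :
    iteratedDeriv 2 sinc x = -((x ^ 2 - 2) * sin x + 2 * x * cos x) / x ^ 3 := by
  rw [iteratedDeriv_two_sinc, intervalIntegral.integral_eq_sub_of_hasDerivAt
    (fun t _ => hasDerivAt_primitive_sq_mul_cos_mul hx t)
    ((by fun_prop : Continuous fun t => t ^ 2 * cos (t * x)).intervalIntegrable 0 1)]
  simp only [one_pow, one_mul, mul_one, zero_mul, mul_zero, sin_zero, cos_zero, add_zero, zero_div,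
    sub_zero]
  ring

/-- For the sinus cardinal function `g(x) = sin(x)/x` (with `g(0) = 1`), the second
derivative satisfies `g''(x) = -((x²-2) sin x + 2x cos x)/x³` for `x ≠ 0`, and
`|g''(x)| ≤ 1/2` for all real `x`. -/
theorem sinc_second_deriv_formula_and_bound
    (g : ℝ → ℝ) (hg : ∀ x, g x = if x = 0 then 1 else Real.sin x / x) :
    (∀ x : ℝ, x ≠ 0 →
      iteratedDeriv 2 g x = -((x ^ 2 - 2) * Real.sin x + 2 * x * Real.cos x) / x ^ 3) ∧
    (∀ x : ℝ, |iteratedDeriv 2 g x| ≤ 1 / 2) := by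
  obtain rfl : g = sinc := funext hg
  exact ⟨fun x hx => iteratedDeriv_two_sinc_of_ne_zero hx,
    fun x => (abs_iteratedDeriv_two_sinc_le x).trans (by norm_num)⟩
end

section
/- If two solutions μ₁ and μ₂ both minimize the functional μ ↦ (1/2)‖y − Aμ‖² + κ‖μ‖₁ over a normed space, where A is a linear map into a Hilbert space and κ > 0, then Aμ₁ = Aμ₂; i.e., the 'prediction' Aμ̂ is uniquely determined by any minimizer. -/
/-!
The data-fit term `μ ↦ ½‖y - Aμ‖²` is strictly convex as a function of the prediction `Aμ`:
by the parallelogram law, at the midpoint `m` of `μ₁` and `μ₂` it lies `‖Aμ₁ - Aμ₂‖² / 8` below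
the average of its values at `μ₁` and `μ₂`. The penalty `κ‖μ‖` is convex, so the same gap
persists for the whole functional, and two minimizers can only coexist if the gap is zero.
-/

open Set

section

variable {X H : Type*} [AddCommGroup X] [Module ℝ X]
  [NormedAddCommGroup H] [InnerProductSpace ℝ H]

lemma norm_sq_midpoint_add_norm_sub_sq (a b : H) :
    ‖(2 : ℝ)⁻¹ • (a + b)‖ ^ 2 + ‖a - b‖ ^ 2 / 4 = (‖a‖ ^ 2 + ‖b‖ ^ 2) / 2 := by
  have hpar := parallelogram_law_with_norm ℝ a b
  rw [norm_smul, mul_pow, norm_inv, Real.norm_ofNat]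
  nlinarith

variable (A : X →ₗ[ℝ] H) (y : H) {R : X → ℝ}

lemma half_sq_dist_add_midpoint_le_of_convexOn (hR : ConvexOn ℝ univ R) (x₁ x₂ : X) :
    (1 / 2 * ‖y - A ((2 : ℝ)⁻¹ • (x₁ + x₂))‖ ^ 2 + R ((2 : ℝ)⁻¹ • (x₁ + x₂)))
        + ‖A x₁ - A x₂‖ ^ 2 / 8
      ≤ ((1 / 2 * ‖y - A x₁‖ ^ 2 + R x₁) + (1 / 2 * ‖y - A x₂‖ ^ 2 + R x₂)) / 2 := by
  have hfit : y - A ((2 : ℝ)⁻¹ • (x₁ + x₂)) = (2 : ℝ)⁻¹ • ((y - A x₁) + (y - A x₂)) := by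
    simp only [map_smul, map_add]
    module
  have hpen : R ((2 : ℝ)⁻¹ • (x₁ + x₂)) ≤ (R x₁ + R x₂) / 2 := by
    have := hR.2 (mem_univ x₁) (mem_univ x₂) (by norm_num : (0 : ℝ) ≤ 2⁻¹)
      (by norm_num : (0 : ℝ) ≤ 2⁻¹) (by norm_num)
    rw [smul_add]
    simp only [smul_eq_mul] at this
    linarith
  have hpar := norm_sq_midpoint_add_norm_sub_sq (y - A x₁) (y - A x₂)
  rw [sub_sub_sub_cancel_left, norm_sub_rev] at hpar
  rw [hfit]
  linarith

theorem map_eq_of_forall_le_half_sq_dist_add_convexOn (hR : ConvexOn ℝ univ R) {x₁ x₂ : X}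
    (h₁ : ∀ x, 1 / 2 * ‖y - A x₁‖ ^ 2 + R x₁ ≤ 1 / 2 * ‖y - A x‖ ^ 2 + R x)
    (h₂ : ∀ x, 1 / 2 * ‖y - A x₂‖ ^ 2 + R x₂ ≤ 1 / 2 * ‖y - A x‖ ^ 2 + R x) :
    A x₁ = A x₂ := by
  have hgap := half_sq_dist_add_midpoint_le_of_convexOn A y hR x₁ x₂
  have hmid := h₁ ((2 : ℝ)⁻¹ • (x₁ + x₂))
  have hx₁₂ := h₂ x₁
  have hx₂₁ := h₁ x₂
  have hsq : ‖A x₁ - A x₂‖ ^ 2 = 0 :=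
    le_antisymm (by linarith) (sq_nonneg _)
  simpa [sub_eq_zero] using hsq

end

theorem prediction_unique_of_minimizers_general
    {X : Type*} [NormedAddCommGroup X] [NormedSpace ℝ X]
    {H : Type*} [NormedAddCommGroup H] [InnerProductSpace ℝ H]
    (A : X →ₗ[ℝ] H) (y : H) (κ : ℝ) (hκ : 0 < κ)
    (F : X → ℝ) (hF : ∀ μ, F μ = (1 / 2) * ‖y - A μ‖ ^ 2 + κ * ‖μ‖)
    (μ₁ μ₂ : X) (h₁ : ∀ μ, F μ₁ ≤ F μ) (h₂ : ∀ μ, F μ₂ ≤ F μ) :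
    A μ₁ = A μ₂ := by
  have hconv : ConvexOn ℝ univ fun μ : X => κ * ‖μ‖ := (convexOn_norm convex_univ).smul hκ.le
  refine map_eq_of_forall_le_half_sq_dist_add_convexOn A y hconv (fun μ => ?_) (fun μ => ?_)
  · simpa only [hF] using h₁ μ
  · simpa only [hF] using h₂ μ

/-- If `μ₁` and `μ₂` both minimize `μ ↦ (1/2)‖y − Aμ‖² + κ‖μ‖` over a normed
space, where `A` is linear into a Hilbert space and `κ > 0`, then `Aμ₁ = Aμ₂`. -/
theorem prediction_unique_of_minimizers
    {X : Type*} [NormedAddCommGroup X] [NormedSpace ℝ X]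
    {H : Type*} [NormedAddCommGroup H] [InnerProductSpace ℝ H] [CompleteSpace H]
    (A : X →ₗ[ℝ] H) (y : H) (κ : ℝ) (hκ : 0 < κ)
    (F : X → ℝ) (hF : ∀ μ, F μ = (1 / 2) * ‖y - A μ‖ ^ 2 + κ * ‖μ‖)
    (μ₁ μ₂ : X) (h₁ : ∀ μ, F μ₁ ≤ F μ) (h₂ : ∀ μ, F μ₂ ≤ F μ) :
    A μ₁ = A μ₂ :=
  prediction_unique_of_minimizers_general A y κ hκ F hF μ₁ μ₂ h₁ h₂
end

section
/- Let μ⁰ = ∑_{k=1}^K a_k⁰ δ_{t_k} with a_k⁰ > 0 and distinct points t_k ∈ ℝᵈ, and suppose P : ℝᵈ → ℝ is continuous with P(t_k)=1 for all k, |P(t)|<1 for t ∉ {t_1,…,t_K}. If μ̂ is a finite signed measure with ‖μ̂‖₁ ≤ ‖μ⁰‖₁ and ∫ P dμ̂ = ‖μ⁰‖₁, then ‖μ̂‖₁ = ‖μ⁰‖₁ and the support of μ̂ is contained in {t_1,…,t_K}. -/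
open MeasureTheory

/-! Since `|P| ≤ 1`, `∫ P dμ̂ ≤ ∫ |P| d|μ̂| ≤ ‖μ̂‖₁ ≤ ‖μ⁰‖₁ = ∫ P dμ̂`, so all these are equalities.
In particular `∫ (1 - |P|) d|μ̂| = 0` with a nonnegative integrand, so `|μ̂|` does not charge
`{|P| < 1}`, which contains the complement of `{t_1,…,t_K}`. -/

namespace MeasureTheory

variable {α : Type*} [MeasurableSpace α]

theorem measure_setOf_lt_eq_zero_of_integral_eq {μ : Measure α} [IsFiniteMeasure μ]
    {g : α → ℝ} {c : ℝ} (hg : Integrable g μ) (hgc : ∀ᵐ x ∂μ, g x ≤ c)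
    (h : ∫ x, g x ∂μ = c * μ.real Set.univ) : μ {x | g x < c} = 0 := by
  have hzero : ∫ x, (c - g x) ∂μ = 0 := by
    rw [integral_sub (integrable_const c) hg, integral_const, h, smul_eq_mul, mul_comm, sub_self]
  have hae : (fun x => c - g x) =ᵐ[μ] 0 :=
    (integral_eq_zero_iff_of_nonneg_ae (hgc.mono fun x hx => sub_nonneg.2 hx)
      ((integrable_const c).sub hg)).1 hzero
  rw [← compl_compl {x | g x < c}, ← mem_ae_iff]
  filter_upwards [hae] with x hx
  simp only [Pi.zero_apply, sub_eq_zero] at hx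
  exact fun hlt => hlt.ne hx.symm

theorem SignedMeasure.integral_posPart_sub_integral_negPart_le (s : SignedMeasure α)
    {f : α → ℝ} (hf : Integrable f s.totalVariation) :
    ∫ x, f x ∂s.toJordanDecomposition.posPart - ∫ x, f x ∂s.toJordanDecomposition.negPart ≤
      ∫ x, |f x| ∂s.totalVariation := by
  have hpos := hf.mono_measure (Measure.le_add_right le_rfl)
  have hneg := hf.mono_measure (Measure.le_add_left le_rfl)
  rw [SignedMeasure.totalVariation, integral_add_measure hpos.abs hneg.abs, sub_eq_add_neg,
    ← integral_neg]
  exact add_le_add (integral_mono hpos hpos.abs fun x => le_abs_self _)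
    (integral_mono hneg.neg hneg.abs fun x => neg_le_abs _)

end MeasureTheory

theorem support_inclusion_from_certificate_general {d K : ℕ}
    (a : Fin K → ℝ)
    (t : Fin K → EuclideanSpace ℝ (Fin d))
    (P : EuclideanSpace ℝ (Fin d) → ℝ) (hPc : Continuous P)
    (hP1 : ∀ k, P (t k) = 1)
    (hPlt : ∀ x, x ∉ Set.range t → |P x| < 1)
    (s : SignedMeasure (EuclideanSpace ℝ (Fin d)))
    (hTV : (s.totalVariation Set.univ).toReal ≤ ∑ k, a k)
    (hint : (∫ x, P x ∂s.toJordanDecomposition.posPart)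
          - (∫ x, P x ∂s.toJordanDecomposition.negPart) = ∑ k, a k) :
    (s.totalVariation Set.univ).toReal = ∑ k, a k ∧
    s.totalVariation (Set.range t)ᶜ = 0 := by
  have hP_le : ∀ x, |P x| ≤ 1 := by
    intro x
    by_cases hx : x ∈ Set.range t
    · obtain ⟨k, rfl⟩ := hx
      simp [hP1]
    · exact (hPlt x hx).le
  have hP_int : Integrable P s.totalVariation :=
    .of_bound hPc.aestronglyMeasurable 1 (ae_of_all _ hP_le)
  have h_upper : ∫ x, |P x| ∂s.totalVariation ≤ s.totalVariation.real Set.univ := by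
    have := norm_integral_le_of_norm_le_const (μ := s.totalVariation) (f := fun x => |P x|)
      (C := 1) (ae_of_all _ fun x => by simpa using hP_le x)
    rw [one_mul, Real.norm_eq_abs] at this
    exact (le_abs_self _).trans this
  have h_lower : ∑ k, a k ≤ ∫ x, |P x| ∂s.totalVariation :=
    hint ▸ SignedMeasure.integral_posPart_sub_integral_negPart_le s hP_int
  have h_norm : s.totalVariation.real Set.univ = ∑ k, a k :=
    le_antisymm hTV (h_lower.trans h_upper)
  refine ⟨h_norm, measure_mono_null (fun x hx => hPlt x hx) ?_⟩
  exact measure_setOf_lt_eq_zero_of_integral_eq hP_int.abs (ae_of_all _ hP_le)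
    (by linarith)

/-- Let `μ⁰ = ∑_k a_k δ_{t_k}` with `a_k > 0` and distinct `t_k`, and `P` continuous with
`P(t_k) = 1` and `|P| < 1` off `{t_1,…,t_K}`. If a finite signed measure `μ̂` satisfies
`‖μ̂‖₁ ≤ ‖μ⁰‖₁` and `∫ P dμ̂ = ‖μ⁰‖₁`, then `‖μ̂‖₁ = ‖μ⁰‖₁` and the support of `μ̂`
is contained in `{t_1,…,t_K}`. -/
theorem support_inclusion_from_certificate {d K : ℕ}
    (a : Fin K → ℝ) (ha : ∀ k, 0 < a k)
    (t : Fin K → EuclideanSpace ℝ (Fin d)) (ht : Function.Injective t)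
    (P : EuclideanSpace ℝ (Fin d) → ℝ) (hPc : Continuous P)
    (hP1 : ∀ k, P (t k) = 1)
    (hPlt : ∀ x, x ∉ Set.range t → |P x| < 1)
    (s : SignedMeasure (EuclideanSpace ℝ (Fin d)))
    (hTV : (s.totalVariation Set.univ).toReal ≤ ∑ k, a k)
    (hint : (∫ x, P x ∂s.toJordanDecomposition.posPart)
          - (∫ x, P x ∂s.toJordanDecomposition.negPart) = ∑ k, a k) :
    (s.totalVariation Set.univ).toReal = ∑ k, a k ∧
    s.totalVariation (Set.range t)ᶜ = 0 :=
  support_inclusion_from_certificate_general a t P hPc hP1 hPlt s hTV hint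
end
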